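/- arXiv:1002.3203 — 3 statements merged into one kernel-verified Lean document; each statement's English description precedes it below -/
import Mathlib

section
/- Let N be a finitely generated nilpotent group. Then N is either virtually abelian or N is not virtually RFRS. (Equivalently: if a finitely generated nilpotent group is virtually RFRS, then it is virtually abelian.) -/
/-!
Let `G` be nilpotent and RFRS with chain `Gᵢ`. If `z` is central and lies in `[G, G]`, then
`z ∈ Gᵢ` for all `i`: the transfer `G → Gᵢᵃᵇ` vanishes on `[G, G]` and maps the central
element `z` to `zⁿ` with `n = [G : Gᵢ]`, so `z` is torsion in `Gᵢᵃᵇ` and hence lies in `Gᵢ₊₁`.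
Thus `Z(G) ∩ [G, G] = 1`. In a nilpotent group this forces `[G, G] = 1`: if `γₖ₊₁ = 1` with
`k ≥ 1`, then `γₖ` is central and contained in `[G, G]`, so `γₖ = 1`.
-/

/-- An RFRS chain for a group `G`: an exhaustive filtration `G = G₀ ≥ G₁ ≥ ⋯` of
normal finite-index subgroups with trivial intersection such that every element of `Gᵢ`
whose image in the abelianization of `Gᵢ` is torsion lies in `Gᵢ₊₁`. -/
def IsRFRSChain {G : Type*} [Group G] (f : ℕ → Subgroup G) : Prop :=
  f 0 = ⊤ ∧
  (∀ i, (f i).Normal) ∧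
  (∀ i, (f i).FiniteIndex) ∧
  (∀ i, f (i + 1) ≤ f i) ∧
  (⨅ i, f i) = ⊥ ∧
  ∀ i, ∀ g : f i, IsOfFinOrder (Abelianization.of g) → (g : G) ∈ f (i + 1)

/-- A group is RFRS if it admits an RFRS chain. -/
def IsRFRS (G : Type*) [Group G] : Prop :=
  ∃ f : ℕ → Subgroup G, IsRFRSChain f

theorem Group.IsNilpotent.commutator_eq_bot_of_center_inf_commutator_eq_bot {G : Type*}
    [Group G] [Group.IsNilpotent G] (h : Subgroup.center G ⊓ commutator G = ⊥) :
    commutator G = ⊥ := by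
  rw [← Subgroup.top_lowerCentralSeries_one]
  refine Nat.decreasingInduction' (P := fun k => (⊤ : Subgroup G).lowerCentralSeries k = ⊥)
    (n := Group.nilpotencyClass G + 1) (fun k _ hk hsucc => ?_) (Nat.le_add_left 1 _)
    (Subgroup.lowerCentralSeries_eq_bot_iff_nilpotencyClass_le.mpr (Nat.le_succ _))
  rw [eq_bot_iff, ← h, ← Subgroup.top_lowerCentralSeries_one]
  exact le_inf (Subgroup.commutator_top_right_eq_bot_iff_le_center.mp hsucc)
    (Subgroup.lowerCentralSeries_antitone ⊤ hk)

theorem isOfFinOrder_of_mem_center_of_mem_commutator {G : Type*} [Group G] {H : Subgroup G}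
    [H.FiniteIndex] {z : G} (hzc : z ∈ Subgroup.center G) (hzG : z ∈ commutator G)
    (hzH : z ∈ H) : IsOfFinOrder (Abelianization.of (⟨z, hzH⟩ : H)) := by
  have htransfer := (Abelianization.of : H →* Abelianization H).transfer_eq_pow z
    fun k g _ => by
      rw [mul_assoc, ← (Commute.pow_right (Subgroup.mem_center_iff.mp hzc g) k).eq,
        inv_mul_cancel_left]
  have hkill : (Abelianization.of : H →* Abelianization H).transfer z = 1 :=
    Abelianization.commutator_subset_ker _ hzG
  refine isOfFinOrder_iff_pow_eq_one.mpr
    ⟨H.index, Nat.pos_of_ne_zero Subgroup.FiniteIndex.index_ne_zero, ?_⟩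
  rw [← hkill, htransfer, ← map_pow]
  rfl

namespace IsRFRSChain

variable {G : Type*} [Group G] {f : ℕ → Subgroup G}

theorem mem_of_mem_center_of_mem_commutator (hf : IsRFRSChain f) {z : G}
    (hzc : z ∈ Subgroup.center G) (hzG : z ∈ commutator G) (i : ℕ) : z ∈ f i := by
  obtain ⟨hf0, -, hfin, -, -, htorsion⟩ := hf
  induction i with
  | zero => exact hf0 ▸ Subgroup.mem_top z
  | succ i ih =>
    have := hfin i
    exact htorsion i ⟨z, ih⟩ (isOfFinOrder_of_mem_center_of_mem_commutator hzc hzG ih)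

theorem center_inf_commutator_eq_bot (hf : IsRFRSChain f) :
    Subgroup.center G ⊓ commutator G = ⊥ := by
  rw [eq_bot_iff]
  rintro z ⟨hzc, hzG⟩
  have hz := Subgroup.mem_iInf.mpr (hf.mem_of_mem_center_of_mem_commutator hzc hzG)
  obtain ⟨-, -, -, -, hinf, -⟩ := hf
  rwa [hinf] at hz

end IsRFRSChain

theorem IsRFRS.isMulCommutative_of_isNilpotent {G : Type*} [Group G] [Group.IsNilpotent G]
    (h : IsRFRS G) : IsMulCommutative G := by
  obtain ⟨f, hf⟩ := h
  exact (commutator_eq_bot_iff G).mp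
    (Group.IsNilpotent.commutator_eq_bot_of_center_inf_commutator_eq_bot
      hf.center_inf_commutator_eq_bot)

theorem fg_nilpotent_virtually_RFRS_implies_virtually_abelian_general
    (N : Type*) [Group N] (hnilp : Group.IsNilpotent N)
    (hRFRS : ∃ H : Subgroup N, H.FiniteIndex ∧ IsRFRS H) :
    ∃ A : Subgroup N, A.FiniteIndex ∧ ∀ x y : A, x * y = y * x := by
  obtain ⟨H, hHfin, hH⟩ := hRFRS
  exact ⟨H, hHfin, isMulCommutative_iff.mp hH.isMulCommutative_of_isNilpotent⟩

/-- A finitely generated nilpotent group is either virtually abelian or not virtually RFRS: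
if it is virtually RFRS, then it is virtually abelian. -/
theorem fg_nilpotent_virtually_RFRS_implies_virtually_abelian
    (N : Type*) [Group N] (hfg : Group.FG N) (hnilp : Group.IsNilpotent N)
    (hRFRS : ∃ H : Subgroup N, H.FiniteIndex ∧ IsRFRS H) :
    ∃ A : Subgroup N, A.FiniteIndex ∧ ∀ x y : A, x * y = y * x :=
  fg_nilpotent_virtually_RFRS_implies_virtually_abelian_general N hnilp hRFRS
end

section
/- Let G be a virtually RFRS group. Then G does not contain a nonabelian torsion-free nilpotent subgroup; that is, every torsion-free nilpotent subgroup of G is abelian. -/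
/-!
A nonabelian nilpotent group `N` has an element `z ≠ 1` that is central and lies in `[N, N]`
(take it in the last nontrivial term of the lower central series); if `N` is torsion-free, a
suitable power `w` of `z` is still nontrivial and lies in the RFRS subgroup `H`. For every
finite-index subgroup `K` of `N` containing `w`, the transfer `N → K^ab` sends the central element
`w` to the image of `w ^ [N : K]`, and it kills `w` because `w` is a commutator. Hence `w` has
finite order in `K^ab`, so also in the abelianization of each term of the RFRS chain containing
it, and it therefore lies in the next term. So `w` lies in the whole chain, whose intersection
is trivial.
-/

theorem Group.IsNilpotent.center_inf_commutator_ne_bot {N : Type*} [Group N]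
    [Group.IsNilpotent N] (h : commutator N ≠ ⊥) :
    Subgroup.center N ⊓ commutator N ≠ ⊥ := by
  set c := Group.nilpotencyClass N - 1
  have hclass : Group.nilpotencyClass N = c + 1 ∧ 1 ≤ c := by
    by_contra! hc
    refine h ?_
    rw [← Subgroup.top_lowerCentralSeries_one]
    exact Subgroup.lowerCentralSeries_eq_bot_iff_nilpotencyClass_le.mpr (by omega)
  have hne : (⊤ : Subgroup N).lowerCentralSeries c ≠ ⊥ := fun hbot =>
    absurd (Subgroup.lowerCentralSeries_eq_bot_iff_nilpotencyClass_le.mp hbot) (by omega)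
  have hcenter : (⊤ : Subgroup N).lowerCentralSeries c ≤ Subgroup.center N := by
    have hsucc := Subgroup.lowerCentralSeries_nilpotencyClass (G := N)
    rwa [hclass.1, Subgroup.lowerCentralSeries_succ,
      Subgroup.commutator_eq_bot_iff_le_centralizer, Subgroup.coe_top,
      Subgroup.centralizer_univ] at hsucc
  have hcomm : (⊤ : Subgroup N).lowerCentralSeries c ≤ commutator N :=
    Subgroup.lowerCentralSeries_antitone _ hclass.2
  exact fun hbot => hne (eq_bot_iff.mpr (hbot ▸ le_inf hcenter hcomm))

/-- Via the transfer `N → K^ab`. -/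
theorem Abelianization.isOfFinOrder_of_mem_center_of_mem_commutator {N : Type*} [Group N]
    (K : Subgroup N) [K.FiniteIndex] (w : K) (hcent : (w : N) ∈ Subgroup.center N)
    (hcomm : (w : N) ∈ commutator N) : IsOfFinOrder (Abelianization.of w) := by
  have hconj : ∀ (k : ℕ) (g : N),
      g⁻¹ * (w : N) ^ k * g ∈ K → g⁻¹ * (w : N) ^ k * g = (w : N) ^ k :=
    fun k g _ => by rw [Subgroup.mem_center_iff.mp (pow_mem hcent k) g⁻¹, inv_mul_cancel_right]
  refine isOfFinOrder_iff_pow_eq_one.mpr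
    ⟨K.index, Nat.pos_of_ne_zero Subgroup.FiniteIndex.index_ne_zero, ?_⟩
  calc Abelianization.of w ^ K.index
      = Abelianization.of ⟨(w : N) ^ K.index, MonoidHom.transfer_eq_pow_aux _ hconj⟩ := by
        rw [← map_pow]; rfl
    _ = (Abelianization.of : K →* _).transfer w := (MonoidHom.transfer_eq_pow _ _ hconj).symm
    _ = 1 := Abelianization.commutator_subset_ker _ hcomm

theorem Abelianization.isOfFinOrder_of_mem_center_of_mem_commutator_of_coe_mem {G : Type*}
    [Group G] {L N : Subgroup G} [L.FiniteIndex] (w : L) (hwN : (w : G) ∈ N)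
    (hcent : ⟨(w : G), hwN⟩ ∈ Subgroup.center N)
    (hcomm : ⟨(w : G), hwN⟩ ∈ commutator N) :
    IsOfFinOrder (Abelianization.of w) := by
  let K := L.subgroupOf N
  let ι : K →* L := (N.subtype.comp K.subtype).codRestrict L fun k => k.2
  have hK := Abelianization.isOfFinOrder_of_mem_center_of_mem_commutator K
    ⟨⟨w, hwN⟩, w.2⟩ hcent hcomm
  have hL := (Abelianization.map ι).isOfFinOrder hK
  rwa [Abelianization.map_of] at hL

theorem IsRFRSChain.eq_one_of_mem_center_of_mem_commutator {G : Type*} [Group G]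
    {H : Subgroup G} [H.FiniteIndex] {f : ℕ → Subgroup H} (hf : IsRFRSChain f)
    {N : Subgroup G} {w : N} (hwH : (w : G) ∈ H) (hcent : w ∈ Subgroup.center N)
    (hcomm : w ∈ commutator N) : w = 1 := by
  obtain ⟨hf0, -, hfi, -, hinf, hstep⟩ := hf
  have hmem : ∀ i, (⟨w, hwH⟩ : H) ∈ f i := by
    intro i
    induction i with
    | zero => exact hf0 ▸ Subgroup.mem_top _
    | succ i ih =>
      let e := (f i).equivMapOfInjective H.subtype H.subtype_injective
      have : ((f i).map H.subtype).FiniteIndex := by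
        rw [Subgroup.finiteIndex_iff, Subgroup.index_map_subtype]
        exact mul_ne_zero (hfi i).index_ne_zero Subgroup.FiniteIndex.index_ne_zero
      have hG := Abelianization.isOfFinOrder_of_mem_center_of_mem_commutator_of_coe_mem
        (e ⟨_, ih⟩) w.2 hcent hcomm
      have hfin : IsOfFinOrder (Abelianization.of (⟨_, ih⟩ : f i)) := by
        simpa only [Abelianization.map_of, MulEquiv.coe_toMonoidHom, MulEquiv.symm_apply_apply]
          using (Abelianization.map e.symm.toMonoidHom).isOfFinOrder hG
      exact hstep i _ hfin
  have hbot := Subgroup.mem_iInf.mpr hmem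
  rw [hinf, Subgroup.mem_bot] at hbot
  exact Subtype.ext (congrArg ((↑) : H → G) hbot)

/-- A virtually RFRS group contains no nonabelian torsion-free nilpotent subgroup:
every torsion-free nilpotent subgroup is abelian. -/
theorem virtually_RFRS_no_nonabelian_torsionfree_nilpotent_subgroup
    (G : Type*) [Group G] (hRFRS : ∃ H : Subgroup G, H.FiniteIndex ∧ IsRFRS H)
    (N : Subgroup G) (htf : ∀ g : N, g ≠ 1 → ¬IsOfFinOrder g) (hnilp : Group.IsNilpotent N) :
    ∀ x y : N, x * y = y * x := by
  intro x y
  by_contra hxy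
  obtain ⟨H, hH, f, hf⟩ := hRFRS
  have hcomm : commutator N ≠ ⊥ := fun h =>
    hxy (((commutator_eq_bot_iff N).mp h).is_comm.comm x y)
  obtain ⟨z, ⟨hzcent, hzcomm⟩, hz⟩ :=
    (Subgroup.bot_or_exists_ne_one _).resolve_left (hnilp.center_inf_commutator_ne_bot hcomm)
  obtain ⟨m, hm, -, hzmH⟩ := H.exists_pow_mem_of_index_ne_zero hH.index_ne_zero (z : G)
  have hzm : z ^ m ≠ 1 := fun h => htf z hz (isOfFinOrder_iff_pow_eq_one.mpr ⟨m, hm, h⟩)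
  exact hzm (hf.eq_one_of_mem_center_of_mem_commutator hzmH (pow_mem hzcent m) (pow_mem hzcomm m))
end

section
/- The integer Heisenberg group, i.e., the group of upper unitriangular 3×3 matrices with integer entries, is not virtually RFRS (in particular, it is not RFRS). -/
/-- The integer Heisenberg group: the group of upper unitriangular `3 × 3` integer
matrices, realized as the subgroup of invertible `3 × 3` integer matrices whose
diagonal entries are `1` and whose below-diagonal entries vanish. -/
def Heisenberg : Subgroup (Matrix (Fin 3) (Fin 3) ℤ)ˣ where
  carrier := {A | (A : Matrix (Fin 3) (Fin 3) ℤ) 0 0 = 1 ∧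
    (A : Matrix (Fin 3) (Fin 3) ℤ) 1 1 = 1 ∧ (A : Matrix (Fin 3) (Fin 3) ℤ) 2 2 = 1 ∧
    (A : Matrix (Fin 3) (Fin 3) ℤ) 1 0 = 0 ∧ (A : Matrix (Fin 3) (Fin 3) ℤ) 2 0 = 0 ∧
    (A : Matrix (Fin 3) (Fin 3) ℤ) 2 1 = 0}
  one_mem' := by
    refine ⟨?_, ?_, ?_, ?_, ?_, ?_⟩ <;> simp [Matrix.one_apply]
  mul_mem' := by
    rintro A B ⟨a00, a11, a22, a10, a20, a21⟩ ⟨b00, b11, b22, b10, b20, b21⟩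
    refine ⟨?_, ?_, ?_, ?_, ?_, ?_⟩ <;>
      simp [Matrix.mul_apply, Fin.sum_univ_three, a00, a11, a22, a10, a20, a21,
        b00, b11, b22, b10, b20, b21]
  inv_mem' := by
    rintro A ⟨a00, a11, a22, a10, a20, a21⟩
    have hinv : (↑A⁻¹ : Matrix (Fin 3) (Fin 3) ℤ) =
        !![1, -((A : Matrix (Fin 3) (Fin 3) ℤ) 0 1),
            (A : Matrix (Fin 3) (Fin 3) ℤ) 0 1 * (A : Matrix (Fin 3) (Fin 3) ℤ) 1 2 -
              (A : Matrix (Fin 3) (Fin 3) ℤ) 0 2;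
           0, 1, -((A : Matrix (Fin 3) (Fin 3) ℤ) 1 2);
           0, 0, 1] := by
      refine Units.inv_eq_of_mul_eq_one_right ?_
      ext i j
      fin_cases i <;> fin_cases j <;>
        simp [Matrix.mul_apply, Fin.sum_univ_three, Matrix.one_apply,
          Matrix.vecHead, Matrix.vecTail, a00, a11, a22, a10, a20, a21] <;> ring_nf
    refine ⟨?_, ?_, ?_, ?_, ?_, ?_⟩ <;> simp [hinv, Matrix.vecHead, Matrix.vecTail]

open scoped commutatorElement

section Commutator

variable {G : Type*} [Group G] {x y : G}

theorem commutatorElement_pow_right (h : Commute ⁅x, y⁆ y) (n : ℕ) :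
    ⁅x, y ^ n⁆ = ⁅x, y⁆ ^ n := by
  have hconj : x * y * x⁻¹ = ⁅x, y⁆ * y := by group
  rw [commutatorElement_def, ← conj_pow, hconj, h.mul_pow, mul_inv_cancel_right]

theorem commutatorElement_pow_left (h : Commute ⁅x, y⁆ x) (m : ℕ) :
    ⁅x ^ m, y⁆ = ⁅x, y⁆ ^ m := by
  have h' : Commute ⁅y, x⁆ x := by
    rw [← commutatorElement_inv]
    exact h.inv_left
  rw [← commutatorElement_inv, commutatorElement_pow_right h', ← inv_pow, commutatorElement_inv]

theorem commutatorElement_pow_pow (hx : Commute ⁅x, y⁆ x) (hy : Commute ⁅x, y⁆ y) (m n : ℕ) :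
    ⁅x ^ m, y ^ n⁆ = ⁅x, y⁆ ^ (m * n) := by
  have hy' : Commute ⁅x ^ m, y⁆ y := by
    rw [commutatorElement_pow_left hx]
    exact hy.pow_left m
  rw [commutatorElement_pow_right hy', commutatorElement_pow_left hx, pow_mul]

end Commutator

section FiniteIndexCommutators

variable {G : Type*} [Group G]

/-- For `g ∈ K` the condition on `K` says that `g` is torsion in the abelianization of `K`. -/
def HasPowInCommutatorOfFiniteIndex (g : G) : Prop :=
  ∀ K : Subgroup G, K.FiniteIndex → ∃ n, 0 < n ∧ g ^ n ∈ ⁅K, K⁆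

theorem hasPowInCommutatorOfFiniteIndex_commutatorElement_pow {x y : G}
    (hx : Commute ⁅x, y⁆ x) (hy : Commute ⁅x, y⁆ y) (k : ℕ) :
    HasPowInCommutatorOfFiniteIndex (⁅x, y⁆ ^ k) := by
  intro K hK
  obtain ⟨a, ha, -, hxa⟩ := K.exists_pow_mem_of_index_ne_zero hK.index_ne_zero x
  obtain ⟨b, hb, -, hyb⟩ := K.exists_pow_mem_of_index_ne_zero hK.index_ne_zero y
  refine ⟨a * b, Nat.mul_pos ha hb, ?_⟩
  have hpow : (⁅x, y⁆ ^ k) ^ (a * b) = ⁅(x ^ a) ^ k, y ^ b⁆ := by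
    rw [← pow_mul, ← pow_mul, commutatorElement_pow_pow hx hy, mul_comm a k, mul_assoc]
  rw [hpow]
  exact Subgroup.commutator_mem_commutator (pow_mem hxa k) hyb

theorem HasPowInCommutatorOfFiniteIndex.subgroup {H : Subgroup G} [H.FiniteIndex] {g : H}
    (hg : HasPowInCommutatorOfFiniteIndex (g : G)) : HasPowInCommutatorOfFiniteIndex g := by
  intro K hK
  have hKG : (K.map H.subtype).FiniteIndex := by
    constructor
    rw [Subgroup.index_map_subtype]
    exact mul_ne_zero hK.index_ne_zero Subgroup.FiniteIndex.index_ne_zero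
  obtain ⟨n, hn, hgn⟩ := hg _ hKG
  refine ⟨n, hn, ?_⟩
  rwa [← Subgroup.map_commutator, ← H.coe_subtype, ← map_pow,
    Subgroup.mem_map_iff_mem H.subtype_injective] at hgn

theorem IsRFRSChain.mem_of_hasPowInCommutatorOfFiniteIndex {f : ℕ → Subgroup G}
    (hf : IsRFRSChain f) {g : G} (hg : HasPowInCommutatorOfFiniteIndex g) (i : ℕ) : g ∈ f i := by
  obtain ⟨hf0, -, hfin, -, -, hstep⟩ := hf
  induction i with
  | zero => simp [hf0]
  | succ i ih =>
    obtain ⟨n, hn, hgn⟩ := hg (f i) (hfin i)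
    refine hstep i ⟨g, ih⟩ (isOfFinOrder_iff_pow_eq_one.2 ⟨n, hn, ?_⟩)
    rwa [← map_pow, ← MonoidHom.mem_ker, Abelianization.ker_of,
      ← Subgroup.mem_map_iff_mem (f i).subtype_injective, Subgroup.map_subtype_commutator]

theorem IsRFRS.eq_one_of_hasPowInCommutatorOfFiniteIndex (hG : IsRFRS G) {g : G}
    (hg : HasPowInCommutatorOfFiniteIndex g) : g = 1 := by
  obtain ⟨f, hf⟩ := hG
  rw [← Subgroup.mem_bot, ← hf.2.2.2.2.1]
  exact Subgroup.mem_iInf.2 (hf.mem_of_hasPowInCommutatorOfFiniteIndex hg)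

end FiniteIndexCommutators

def heisenbergMatrix (a b c : ℤ) : Matrix (Fin 3) (Fin 3) ℤ :=
  !![1, a, c; 0, 1, b; 0, 0, 1]

theorem heisenbergMatrix_mul (a b c a' b' c' : ℤ) :
    heisenbergMatrix a b c * heisenbergMatrix a' b' c' =
      heisenbergMatrix (a + a') (b + b') (c + c' + a * b') := by
  ext i j
  fin_cases i <;> fin_cases j <;>
    simp [heisenbergMatrix, Matrix.mul_apply, Fin.sum_univ_three] <;> ring

theorem heisenbergMatrix_zero : heisenbergMatrix 0 0 0 = 1 := by
  ext i j
  fin_cases i <;> fin_cases j <;> rfl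

def Heisenberg.mk (a b c : ℤ) : Heisenberg :=
  ⟨⟨heisenbergMatrix a b c, heisenbergMatrix (-a) (-b) (a * b - c),
      by rw [heisenbergMatrix_mul, ← heisenbergMatrix_zero]; congr 1 <;> ring,
      by rw [heisenbergMatrix_mul, ← heisenbergMatrix_zero]; congr 1 <;> ring⟩,
    by simp [Heisenberg, heisenbergMatrix]⟩

namespace Heisenberg

theorem mk_mul (a b c a' b' c' : ℤ) :
    mk a b c * mk a' b' c' = mk (a + a') (b + b') (c + c' + a * b') :=
  Subtype.ext (Units.ext (heisenbergMatrix_mul a b c a' b' c'))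

theorem mk_zero : mk 0 0 0 = 1 :=
  Subtype.ext (Units.ext heisenbergMatrix_zero)

theorem mk_inv (a b c : ℤ) : (mk a b c)⁻¹ = mk (-a) (-b) (a * b - c) := by
  refine inv_eq_of_mul_eq_one_right ?_
  rw [mk_mul, ← mk_zero]
  congr 1 <;> ring

theorem mk_center_injective : Function.Injective (mk 0 0) := fun _ _ h ↦
  congrArg (fun A : Heisenberg ↦ (A : (Matrix (Fin 3) (Fin 3) ℤ)ˣ).val 0 2) h

theorem commutatorElement_mk : ⁅mk 1 0 0, mk 0 1 0⁆ = mk 0 0 1 := by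
  rw [commutatorElement_def, mk_inv, mk_inv, mk_mul, mk_mul, mk_mul]
  norm_num

theorem commute_mk_center (c a b : ℤ) : Commute (mk 0 0 c) (mk a b 0) := by
  rw [Commute, SemiconjBy, mk_mul, mk_mul]
  congr 1 <;> ring

theorem mk_center_pow (c : ℤ) (n : ℕ) : mk 0 0 c ^ n = mk 0 0 (n * c) := by
  induction n with
  | zero => simp [mk_zero]
  | succ n ih => rw [pow_succ, ih, mk_mul]; congr 1; push_cast; ring

theorem not_isOfFinOrder_mk_center : ¬ IsOfFinOrder (mk 0 0 1) := by
  rw [isOfFinOrder_iff_pow_eq_one]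
  rintro ⟨n, hn, hpow⟩
  rw [mk_center_pow, ← mk_zero] at hpow
  have := mk_center_injective hpow
  omega

theorem hasPowInCommutatorOfFiniteIndex_mk_center_pow (k : ℕ) :
    HasPowInCommutatorOfFiniteIndex (mk 0 0 1 ^ k) := by
  rw [← commutatorElement_mk]
  apply hasPowInCommutatorOfFiniteIndex_commutatorElement_pow <;> rw [commutatorElement_mk]
  exacts [commute_mk_center 1 1 0, commute_mk_center 1 0 1]

end Heisenberg

/-- The integer Heisenberg group is not virtually RFRS (in particular it is not RFRS). -/
theorem heisenberg_not_virtually_RFRS :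
    ¬ ∃ H : Subgroup Heisenberg, H.FiniteIndex ∧ IsRFRS H := by
  rintro ⟨H, hH, hRFRS⟩
  obtain ⟨k, hk, -, hzk⟩ :=
    H.exists_pow_mem_of_index_ne_zero hH.index_ne_zero (Heisenberg.mk 0 0 1)
  have hz : (⟨_, hzk⟩ : H) = 1 := hRFRS.eq_one_of_hasPowInCommutatorOfFiniteIndex
    (Heisenberg.hasPowInCommutatorOfFiniteIndex_mk_center_pow k).subgroup
  exact Heisenberg.not_isOfFinOrder_mk_center
    (isOfFinOrder_iff_pow_eq_one.2 ⟨k, hk, congrArg Subtype.val hz⟩)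
end
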